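/- Let K be a field, let n > 2 be an odd natural number, let A, B ∈ K, and let x : ℕ → K be a sequence with x_m ≠ 0 for all m satisfying x_m · x_{m+n} = ∑_{1≤i<j≤n−1} x_{m+i}·x_{m+j} + A·∑_{i=1}^{n−1} x_{m+i} + B for all m ≥ 0. Define J_m = (∑_{i=0}^{n−1} x_{m+i} + A) / ∏_{i=0}^{(n−3)/2} x_{m+2i+1}. Then J_{m+2} = J_m for all m ≥ 0; that is, J_m is a 2-invariant of the recurrence, depending only on the parity of m. -/

import Mathlib

/-!
Write `S m = x m + ⋯ + x (m + n - 1)` and `P m` for the denominator of `J m`. Subtracting the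
recurrence at `m` from the one at `m + 1`, the quadratic terms of the common window
`x (m + 2), …, x (m + n - 1)` cancel, and what remains rearranges to
`x (m + 1) * (S (m + 2) + A) = x (m + n) * (S m + A)`. Shifting by two replaces the factor
`x (m + 1)` of `P m` by `x (m + n)`, i.e. `x (m + 1) * P (m + 2) = x (m + n) * P m`, so the
ratio `J` is unchanged.
-/

open Finset

theorem sum_Icc_sub_one_add_eq_sum_Ico {R : Type*} [AddCommMonoid R] (f : ℕ → R) {n : ℕ}
    (hn : 0 < n) (a m : ℕ) : ∑ i ∈ Icc a (n - 1), f (m + i) = ∑ i ∈ Ico (m + a) (m + n), f i := by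
  rw [Icc_sub_one_right_eq_Ico_of_not_isMin (not_isMin_iff.2 ⟨0, hn⟩), sum_Ico_add,
    add_comm a, add_comm n]

theorem sum_range_add_eq_sum_Ico {R : Type*} [AddCommMonoid R] (f : ℕ → R) (m n : ℕ) :
    ∑ i ∈ range n, f (m + i) = ∑ i ∈ Ico m (m + n), f i := by
  rw [sum_Ico_eq_sum_range, Nat.add_sub_cancel_left]

theorem prod_range_succ_mul_eq {M : Type*} [CommMonoid M] (f : ℕ → M) (k : ℕ) :
    (∏ i ∈ range k, f (i + 1)) * f 0 = (∏ i ∈ range k, f i) * f k := by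
  rw [← prod_range_succ', prod_range_succ]

section PairSum

variable {K : Type*} [CommRing K] (x : ℕ → K)

def pairSum (a b : ℕ) : K := ∑ i ∈ Ico a b, ∑ j ∈ Ico (i + 1) b, x i * x j

theorem pairSum_succ_right {a b : ℕ} (hab : a ≤ b) :
    pairSum x a (b + 1) = pairSum x a b + (∑ i ∈ Ico a b, x i) * x b := by
  rw [pairSum, pairSum, sum_Ico_succ_top hab, Ico_self, sum_empty, add_zero, sum_mul,
    ← sum_add_distrib]
  refine sum_congr rfl fun i hi => ?_
  rw [sum_Ico_succ_top (by simp at hi; omega)]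

theorem pairSum_eq_mul_sum_add {a b : ℕ} (hab : a < b) :
    pairSum x a b = x a * ∑ i ∈ Ico (a + 1) b, x i + pairSum x (a + 1) b := by
  rw [pairSum, sum_eq_sum_Ico_succ_bot hab, mul_sum, pairSum]

theorem sum_Icc_pairs_eq_pairSum {n : ℕ} (hn : 0 < n) (m : ℕ) :
    ∑ i ∈ Icc 1 (n - 1), ∑ j ∈ Icc (i + 1) (n - 1), x (m + i) * x (m + j) =
      pairSum x (m + 1) (m + n) := by
  rw [pairSum,
    ← sum_Icc_sub_one_add_eq_sum_Ico (fun i => ∑ j ∈ Ico (i + 1) (m + n), x i * x j) hn]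
  refine sum_congr rfl fun i _ => ?_
  rw [sum_Icc_sub_one_add_eq_sum_Ico (fun j => x (m + i) * x j) hn, add_assoc]

theorem mul_sum_window_add_eq {n : ℕ} (hn : 2 ≤ n) (A B : K)
    (hrec : ∀ m, x m * x (m + n) =
      pairSum x (m + 1) (m + n) + A * ∑ i ∈ Ico (m + 1) (m + n), x i + B) (m : ℕ) :
    x (m + 1) * (∑ i ∈ range n, x (m + 2 + i) + A) =
      x (m + n) * (∑ i ∈ range n, x (m + i) + A) := by
  have h0 := hrec m
  have h1 := hrec (m + 1)
  have hlt : m + 1 < m + n := by omega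
  have hle : m + 2 ≤ m + n := by omega
  rw [pairSum_eq_mul_sum_add x hlt, sum_eq_sum_Ico_succ_bot hlt] at h0
  rw [show m + 1 + 1 = m + 2 by ring, show m + 1 + n = m + n + 1 by ring,
    pairSum_succ_right x hle, sum_Ico_succ_top hle] at h1
  rw [sum_range_add_eq_sum_Ico, sum_range_add_eq_sum_Ico, show m + 2 + n = m + n + 1 + 1 by ring,
    sum_Ico_succ_top (by omega : m + 2 ≤ m + n + 1), sum_Ico_succ_top hle,
    sum_eq_sum_Ico_succ_bot (by omega : m < m + n), sum_eq_sum_Ico_succ_bot hlt]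
  linear_combination h1 - h0

end PairSum

/-- Section 7.6: the 2-invariant for the recurrence generated by the multilinear
symmetric polynomial `P = ∑_{i<j} x_i·x_j + A·∑ x_i + B`, `n` odd. -/
theorem stmt19 {K : Type*} [Field K] (n : ℕ) (hn : 2 < n) (hodd : Odd n) (A B : K)
    (x : ℕ → K) (hnz : ∀ m, x m ≠ 0)
    (hrec : ∀ m, x m * x (m + n) =
      (∑ i ∈ Finset.Icc 1 (n - 1), ∑ j ∈ Finset.Icc (i + 1) (n - 1),
          x (m + i) * x (m + j)) +
        A * (∑ i ∈ Finset.Icc 1 (n - 1), x (m + i)) + B)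
    (J : ℕ → K)
    (hJ : ∀ m, J m = ((∑ i ∈ Finset.range n, x (m + i)) + A) /
      ∏ i ∈ Finset.range ((n - 3) / 2 + 1), x (m + 2 * i + 1)) :
    ∀ m, J (m + 2) = J m := by
  have hwin : ∀ m, x m * x (m + n) =
      pairSum x (m + 1) (m + n) + A * ∑ i ∈ Ico (m + 1) (m + n), x i + B := fun m => by
    rw [← sum_Icc_pairs_eq_pairSum x (by omega), ← sum_Icc_sub_one_add_eq_sum_Ico x (by omega)]
    exact hrec m
  intro m
  have hsum := mul_sum_window_add_eq x hn.le A B hwin m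
  obtain ⟨k, rfl⟩ := hodd
  have hprod : (∏ i ∈ range k, x (m + 2 + 2 * i + 1)) * x (m + 1) =
      (∏ i ∈ range k, x (m + 2 * i + 1)) * x (m + (2 * k + 1)) := by
    simp only [show ∀ i, m + 2 + 2 * i + 1 = m + 2 * (i + 1) + 1 by omega]
    exact prod_range_succ_mul_eq (fun i => x (m + 2 * i + 1)) k
  rw [hJ, hJ, show (2 * k + 1 - 3) / 2 + 1 = k by omega,
    div_eq_div_iff (prod_ne_zero_iff.2 fun _ _ => hnz _) (prod_ne_zero_iff.2 fun _ _ => hnz _)]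
  refine mul_left_cancel₀ (hnz (m + 1)) ?_
  linear_combination (∏ i ∈ range k, x (m + 2 * i + 1)) * hsum -
    (∑ i ∈ range (2 * k + 1), x (m + i) + A) * hprod
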